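/- arXiv:2301.08714 — 2 statements merged into one kernel-verified Lean document; each statement's English description precedes it below -/
import Mathlib

section
/- Let X be a type, post : Set X → Set X a monotone operator, and c : Set X → Set X an operator such that for every set S ⊆ X there exists a set S' with S ⊆ S' and c(S) = post(S'). Then for every initial set X0 ⊆ X and every natural number t, post^[t](X0) ⊆ c^[t](X0). -/
theorem Monotone.le_of_forall_exists_le_eq {α β : Type*} [Preorder α] [Preorder β]
    {f g : α → β} (hf : Monotone f) (hg : ∀ a, ∃ b, a ≤ b ∧ g a = f b) : f ≤ g := fun a => by
  obtain ⟨b, hab, hgb⟩ := hg a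
  exact hgb ▸ hf hab

/-- Proposition 3 of the Verse paper (soundness of incremental verification),
at the level of post operators. -/
theorem verifyInc_sound {X : Type*} (post c : Set X → Set X)
    (hmono : ∀ S S' : Set X, S ⊆ S' → post S ⊆ post S')
    (hcache : ∀ S : Set X, ∃ S' : Set X, S ⊆ S' ∧ c S = post S') :
    ∀ (X0 : Set X) (t : ℕ), post^[t] X0 ⊆ c^[t] X0 := by
  have hpost : Monotone post := fun S S' h => hmono S S' h
  intro X0 t
  exact hpost.iterate_le_of_le (hpost.le_of_forall_exists_le_eq hcache) t X0
end

section
/- Let X be a type, R : X → X → Prop a one-step transition relation, X0 ⊆ X an initial set, and U ⊆ X a set of unsafe states. Let c : Set X → Set X be a monotone-soundly over-approximating operator, i.e. {y | ∃ x ∈ S, R x y} ⊆ c(S) for every S ⊆ X. Fix m : ℕ and suppose c^[t](X0) ∩ U = ∅ for every t ≤ m. Then every execution of length at most m avoids U: for every t ≤ m and every x : Fin (t+1) → X with x 0 ∈ X0 and R (x i.castSucc) (x i.succ) for all i : Fin t, the final state x (Fin.last t) is not in U. -/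
theorem mem_iterate_of_forall_step {X : Type*} {R : X → X → Prop} {c : Set X → Set X}
    (hover : ∀ S : Set X, {y | ∃ x ∈ S, R x y} ⊆ c S) {S : Set X} :
    ∀ {t : ℕ} (x : Fin (t + 1) → X), x 0 ∈ S →
      (∀ i : Fin t, R (x i.castSucc) (x i.succ)) → x (Fin.last t) ∈ c^[t] S
  | 0, _, hx0, _ => hx0
  | t + 1, x, hx0, hstep => by
    have hinit : Fin.init x (Fin.last t) ∈ c^[t] S :=
      mem_iterate_of_forall_step hover (Fin.init x) hx0 fun i => by
        simpa only [Fin.init, ← Fin.succ_castSucc] using hstep i.castSucc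
    rw [Function.iterate_succ_apply']
    exact hover _ ⟨_, hinit, hstep (Fin.last t)⟩

/-- Soundness of bounded-horizon safety verification: if every level of the
over-approximating reachability computation is disjoint from the unsafe set,
then every execution of length at most `m` avoids the unsafe set. -/
theorem bounded_safety_sound {X : Type*} (R : X → X → Prop) (X0 U : Set X)
    (c : Set X → Set X)
    (hover : ∀ S : Set X, {y | ∃ x ∈ S, R x y} ⊆ c S)
    (m : ℕ) (hsafe : ∀ t ≤ m, c^[t] X0 ∩ U = ∅) :
    ∀ t ≤ m, ∀ x : Fin (t + 1) → X, x 0 ∈ X0 →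
      (∀ i : Fin t, R (x i.castSucc) (x i.succ)) →
      x (Fin.last t) ∉ U := by
  intro t ht x hx0 hstep hU
  have hreach : x (Fin.last t) ∈ c^[t] X0 := mem_iterate_of_forall_step hover x hx0 hstep
  exact Set.eq_empty_iff_forall_notMem.mp (hsafe t ht) _ ⟨hreach, hU⟩
end
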